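/- Let h, r be integers with h ≠ 0 such that the h-th powers r_1^h, ..., r_m^h of the roots of the characteristic polynomial are pairwise distinct and none of them equals 1. If polynomials γ_1(x), γ_2(x), ..., γ_{m+1}(x) ∈ ℂ[x] satisfy γ_1(n)·s_{(n+1)h+r} + γ_2(n)·s_{(n+2)h+r} + ⋯ + γ_m(n)·s_{(n+m)h+r} + γ_{m+1}(n) = 0 for every positive integer n, then γ_1(x) = γ_2(x) = ⋯ = γ_{m+1}(x) = 0 as polynomials. -/

import Mathlib

open Polynomial Matrix

lemma my_zero_of_eval_nat {p : ℂ[X]} (h : ∀ n : ℕ, 0 < n → p.eval (n : ℂ) = 0) : p = 0 := by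
  refine Polynomial.eq_zero_of_infinite_isRoot p ?_
  apply Set.infinite_of_injective_forall_mem (f := fun n : ℕ => ((n + 1 : ℕ) : ℂ))
    (hi := ?_) (hf := ?_)
  · intro a b hab
    have : (a + 1 : ℕ) = (b + 1 : ℕ) := Nat.cast_injective hab
    omega
  · intro n
    exact h (n + 1) (Nat.succ_pos n)

lemma my_step_eq_zero {z w : ℂ} (hzw : z ≠ w) {p : ℂ[X]}
    (h : C z * p.comp (X + C 1) - C w * p = 0) : p = 0 := by
  by_contra hp
  have h1 : C z * p.comp (X + C 1) = C w * p := sub_eq_zero.mp h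
  have h2 := congrArg leadingCoeff h1
  rw [leadingCoeff_mul, leadingCoeff_mul, leadingCoeff_C, leadingCoeff_C,
    leadingCoeff_comp (by rw [natDegree_X_add_C]; exact one_ne_zero)] at h2
  simp only [leadingCoeff_X_add_C, one_pow, mul_one] at h2
  exact hzw (mul_right_cancel₀ (leadingCoeff_ne_zero.mpr hp) h2)

lemma my_comp_ne_zero {p : ℂ[X]} (hp : p ≠ 0) : p.comp (X + C 1) ≠ 0 := by
  intro h0
  apply hp
  have : (p.comp (X + C 1)).comp (X + C (-1)) = p := by
    rw [comp_assoc]; simp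
  rw [h0, zero_comp] at this
  exact this.symm

/-- Key independence of exponential-polynomial sums. -/
lemma my_expPoly : ∀ (t : ℕ) (z : Fin t → ℂ), Function.Injective z → (∀ i, z i ≠ 0) →
    ∀ (p : Fin t → ℂ[X]),
    (∀ n : ℕ, 0 < n → ∑ i, (p i).eval (n : ℂ) * z i ^ n = 0) → ∀ i, p i = 0 := by
  intro t
  induction t with
  | zero => intro z _ _ p _ i; exact absurd i.2 (by omega)
  | succ t IH =>
    intro z hz hz0
    -- inner induction on the degree of the last polynomial
    have key : ∀ d : ℕ, ∀ p : Fin (t+1) → ℂ[X], (p (Fin.last t)).natDegree ≤ d →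
        (∀ n : ℕ, 0 < n → ∑ i, (p i).eval (n : ℂ) * z i ^ n = 0) → ∀ i, p i = 0 := by
      intro d
      induction d with
      | zero =>
        intro p hdeg hyp
        -- q i = C (z i) * (p i).comp (X+1) - C (z last) * p i
        set L := Fin.last t with hL
        set q : Fin (t+1) → ℂ[X] :=
          fun i => C (z i) * (p i).comp (X + C 1) - C (z L) * p i with hq
        have hypq : ∀ n : ℕ, 0 < n → ∑ i, (q i).eval (n : ℂ) * z i ^ n = 0 := by
          intro n hn
          have e1 := hyp (n+1) (by omega)
          have e2 := hyp n hn
          have : ∑ i, (q i).eval (n : ℂ) * z i ^ n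
              = ∑ i, ((p i).eval ((n+1 : ℕ) : ℂ) * z i ^ (n+1))
                - z L * ∑ i, (p i).eval (n : ℂ) * z i ^ n := by
            rw [Finset.mul_sum, ← Finset.sum_sub_distrib]
            refine Finset.sum_congr rfl fun i _ => ?_
            simp only [hq, eval_sub, eval_mul, eval_C, eval_comp, eval_add, eval_X, eval_one]
            push_cast
            ring
          rw [this, e1, e2, mul_zero, sub_zero]
        -- last polynomial is constant, hence q L = 0
        have hpL : p L = C ((p L).coeff 0) := eq_C_of_natDegree_le_zero hdeg
        have hqL : q L = 0 := by
          simp only [hq]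
          rw [hpL]; simp
        -- restrict to the first t terms
        have hypq' : ∀ n : ℕ, 0 < n →
            ∑ i : Fin t, (q i.castSucc).eval (n : ℂ) * z i.castSucc ^ n = 0 := by
          intro n hn
          have := hypq n hn
          rw [Fin.sum_univ_castSucc, hqL] at this
          simpa using this
        have hq0 : ∀ i : Fin t, q i.castSucc = 0 := by
          refine IH (fun i => z i.castSucc) ?_ (fun i => hz0 _) (fun i => q i.castSucc) hypq'
          intro i j hij
          exact Fin.castSucc_injective t (hz hij)
        have hp0 : ∀ i : Fin t, p i.castSucc = 0 := by
          intro i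
          refine my_step_eq_zero (z := z i.castSucc) (w := z L) ?_ (hq0 i)
          intro he
          exact absurd (hz he) (Fin.ne_of_lt (Fin.castSucc_lt_last i))
        -- now the last one
        have hlast : p L = 0 := by
          apply my_zero_of_eval_nat
          intro n hn
          have := hyp n hn
          rw [Fin.sum_univ_castSucc] at this
          simp only [fun i : Fin t => hp0 i] at this
          simp only [eval_zero, zero_mul, Finset.sum_const_zero, zero_add] at this
          exact (mul_eq_zero.mp this).resolve_right (pow_ne_zero n (hz0 L))
        intro i
        rcases Fin.lastCases (motive := fun i => p i = 0) hlast hp0 i with h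
        exact h
      | succ d IHd =>
        intro p hdeg hyp
        by_cases hple : (p (Fin.last t)).natDegree ≤ d
        · exact IHd p hple hyp
        have hdeq : (p (Fin.last t)).natDegree = d + 1 := by omega
        set L := Fin.last t with hL
        have hpLne : p L ≠ 0 := by
          intro h0; rw [h0] at hdeq; simp at hdeq
        set q : Fin (t+1) → ℂ[X] :=
          fun i => C (z i) * (p i).comp (X + C 1) - C (z L) * p i with hq
        have hypq : ∀ n : ℕ, 0 < n → ∑ i, (q i).eval (n : ℂ) * z i ^ n = 0 := by
          intro n hn
          have e1 := hyp (n+1) (by omega)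
          have e2 := hyp n hn
          have : ∑ i, (q i).eval (n : ℂ) * z i ^ n
              = ∑ i, ((p i).eval ((n+1 : ℕ) : ℂ) * z i ^ (n+1))
                - z L * ∑ i, (p i).eval (n : ℂ) * z i ^ n := by
            rw [Finset.mul_sum, ← Finset.sum_sub_distrib]
            refine Finset.sum_congr rfl fun i _ => ?_
            simp only [hq, eval_sub, eval_mul, eval_C, eval_comp, eval_add, eval_X, eval_one]
            push_cast
            ring
          rw [this, e1, e2, mul_zero, sub_zero]
        -- degree of q L decreased
        have hqLform : q L = C (z L) * ((p L).comp (X + C 1) - p L) := by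
          simp only [hq]; ring
        have hdegq : (q L).natDegree ≤ d := by
          rcases eq_or_ne ((p L).comp (X + C 1) - p L) 0 with h0 | h0
          · rw [hqLform, h0, mul_zero]; simp
          · have hdd : ((p L).comp (X + C 1)).degree = (p L).degree := by
              rw [degree_eq_natDegree (my_comp_ne_zero hpLne), degree_eq_natDegree hpLne]
              norm_cast
              rw [natDegree_comp, natDegree_X_add_C, mul_one]
            have hdlt : ((p L).comp (X + C 1) - p L).degree < (p L).degree := by
              rw [← hdd]
              apply degree_sub_lt hdd (my_comp_ne_zero hpLne)
              rw [leadingCoeff_comp (by rw [natDegree_X_add_C]; exact one_ne_zero),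
                leadingCoeff_X_add_C, one_pow, mul_one]
            have : ((p L).comp (X + C 1) - p L).natDegree < (p L).natDegree :=
              natDegree_lt_natDegree h0 hdlt
            rw [hqLform]
            rw [natDegree_C_mul (hz0 L)]
            omega
        have hq0 : ∀ i, q i = 0 := IHd q hdegq hypq
        have hp0 : ∀ i : Fin t, p i.castSucc = 0 := by
          intro i
          refine my_step_eq_zero (z := z i.castSucc) (w := z L) ?_ (hq0 i.castSucc)
          intro he
          exact absurd (hz he) (Fin.ne_of_lt (Fin.castSucc_lt_last i))
        have hlast : p L = 0 := by
          apply my_zero_of_eval_nat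
          intro n hn
          have := hyp n hn
          rw [Fin.sum_univ_castSucc] at this
          simp only [fun i : Fin t => hp0 i] at this
          simp only [eval_zero, zero_mul, Finset.sum_const_zero, zero_add] at this
          exact (mul_eq_zero.mp this).resolve_right (pow_ne_zero n (hz0 L))
        exact absurd hlast hpLne
    intro p hyp
    exact key ((p (Fin.last t)).natDegree) p le_rfl hyp


lemma my_seq_unique (m : ℕ) (hm : 1 ≤ m) (a : Fin m → ℂ) (ha1 : a ⟨0, by omega⟩ ≠ 0)
    (w : ℤ → ℂ)
    (hrec : ∀ k : ℤ, w (k + m) = ∑ i : Fin m, a i * w (k + (i : ℕ)))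
    (hinit : ∀ i : Fin m, w ((i : ℕ) : ℤ) = 0) : ∀ k, w k = 0 := by
  set A : ℤ → Prop := fun k => ∀ i : Fin m, w (k + (i : ℕ)) = 0 with hA
  have hA0 : A 0 := by
    intro i
    simpa using hinit i
  have hfwd : ∀ k : ℤ, A k → A (k + 1) := by
    intro k hk i
    rcases lt_or_ge ((i : ℕ) + 1) m with hi | hi
    · have h2 := hk ⟨(i : ℕ) + 1, hi⟩
      have e : k + 1 + ((i : ℕ) : ℤ) = k + (((i : ℕ) + 1 : ℕ) : ℤ) := by push_cast; ring
      rw [e]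
      exact_mod_cast h2
    · have him : (i : ℕ) = m - 1 := by omega
      have : k + 1 + (i : ℕ) = k + m := by
        rw [him]; push_cast; omega
      rw [this, hrec k]
      apply Finset.sum_eq_zero
      intro j _
      rw [hk j, mul_zero]
  have hbwd : ∀ k : ℤ, A k → A (k - 1) := by
    intro k hk
    have h0 : w (k - 1) = 0 := by
      have hr := hrec (k - 1)
      have hL : w (k - 1 + m) = 0 := by
        have : k - 1 + (m : ℤ) = k + ((m - 1 : ℕ) : ℕ) := by push_cast; omega
        rw [this]
        exact hk ⟨m - 1, by omega⟩
      have hR : ∑ i : Fin m, a i * w (k - 1 + (i : ℕ))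
          = a ⟨0, by omega⟩ * w (k - 1) := by
        rw [Finset.sum_eq_single_of_mem (⟨0, by omega⟩ : Fin m) (Finset.mem_univ _)]
        · norm_num
        · intro j _ hj
          have hj0 : 1 ≤ (j : ℕ) := by
            rcases Nat.eq_zero_or_pos (j : ℕ) with h | h
            · exact absurd (Fin.ext h) hj
            · exact h
          have : k - 1 + ((j : ℕ) : ℤ) = k + (((j : ℕ) - 1 : ℕ) : ℤ) := by
            push_cast; omega
          rw [this, hk ⟨(j : ℕ) - 1, by omega⟩, mul_zero]
      rw [hL, hR] at hr
      exact (mul_eq_zero.mp hr.symm).resolve_left ha1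
    intro i
    rcases Nat.eq_zero_or_pos (i : ℕ) with h | h
    · simpa [h] using h0
    · have : k - 1 + ((i : ℕ) : ℤ) = k + (((i : ℕ) - 1 : ℕ) : ℤ) := by push_cast; omega
      rw [this]
      exact hk ⟨(i : ℕ) - 1, by omega⟩
  have hall : ∀ k : ℤ, A k := by
    intro k
    induction k using Int.induction_on with
    | zero => exact hA0
    | succ i hi => exact hfwd i hi
    | pred i hi => simpa [sub_eq_add_neg, add_comm] using hbwd (-(i : ℤ)) hi
  intro k
  simpa using hall k ⟨0, by omega⟩

lemma my_rt_ne_zero (m : ℕ) (hm : m ≥ 2) (a : Fin m → ℂ) (ha1 : a ⟨0, by omega⟩ ≠ 0)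
    (rt : Fin m → ℂ) (hroot : ∀ i, rt i ^ m = ∑ j : Fin m, a j * rt i ^ (j : ℕ)) :
    ∀ i, rt i ≠ 0 := by
  intro i h0
  have := hroot i
  rw [h0] at this
  rw [zero_pow (by omega)] at this
  rw [Finset.sum_eq_single_of_mem (⟨0, by omega⟩ : Fin m) (Finset.mem_univ _)] at this
  · simp at this
    exact ha1 this.symm
  · intro j _ hj
    have hj0 : (j : ℕ) ≠ 0 := fun h => hj (Fin.ext h)
    rw [zero_pow hj0, mul_zero]

lemma my_rep (m : ℕ) (hm : m ≥ 2) (a : Fin m → ℂ) (ha1 : a ⟨0, by omega⟩ ≠ 0)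
    (s : ℤ → ℂ)
    (hrec : ∀ k : ℤ, s (k + m) = ∑ i : Fin m, a i * s (k + (i : ℕ)))
    (hmin : ∀ d : ℕ, d < m → ∀ b : Fin d → ℂ,
      ¬ (∀ k : ℤ, s (k + d) = ∑ i : Fin d, b i * s (k + (i : ℕ))))
    (rt : Fin m → ℂ)
    (hroot : ∀ i, rt i ^ m = ∑ j : Fin m, a j * rt i ^ (j : ℕ))
    (hrt : Function.Injective rt) :
    ∃ c : Fin m → ℂ, (∀ i, c i ≠ 0) ∧ ∀ k : ℤ, s k = ∑ i, c i * rt i ^ k := by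
  have rtne : ∀ i, rt i ≠ 0 := my_rt_ne_zero m hm a ha1 rt hroot
  set V : Matrix (Fin m) (Fin m) ℂ := (Matrix.vandermonde rt)ᵀ with hV
  have hdet : V.det ≠ 0 := by
    rw [hV, Matrix.det_transpose]
    exact Matrix.det_vandermonde_ne_zero_iff.mpr hrt
  set c : Fin m → ℂ := V⁻¹.mulVec (fun j => s ((j : ℕ) : ℤ)) with hc
  have hVc : V.mulVec c = fun j : Fin m => s ((j : ℕ) : ℤ) := by
    rw [hc, Matrix.mulVec_mulVec, Matrix.mul_nonsing_inv _ (isUnit_iff_ne_zero.mpr hdet),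
      Matrix.one_mulVec]
  set u : ℤ → ℂ := fun k => ∑ i, c i * rt i ^ k with hu
  have hu_init : ∀ j : Fin m, u ((j : ℕ) : ℤ) = s ((j : ℕ) : ℤ) := by
    intro j
    have := congrFun hVc j
    rw [← this]
    simp only [hu, Matrix.mulVec, dotProduct, hV, Matrix.transpose_apply,
      Matrix.vandermonde, Matrix.of_apply]
    refine Finset.sum_congr rfl fun i _ => ?_
    rw [zpow_natCast, mul_comm]
  have hu_rec : ∀ k : ℤ, u (k + m) = ∑ i : Fin m, a i * u (k + (i : ℕ)) := by
    intro k
    simp only [hu]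
    have key : ∀ i : Fin m, c i * rt i ^ (k + (m : ℤ))
        = ∑ j : Fin m, a j * (c i * rt i ^ (k + ((j : ℕ) : ℤ))) := by
      intro i
      calc c i * rt i ^ (k + (m : ℤ)) = c i * rt i ^ k * rt i ^ m := by
            rw [zpow_add₀ (rtne i), zpow_natCast]; ring
        _ = ∑ j : Fin m, a j * (c i * rt i ^ (k + ((j : ℕ) : ℤ))) := by
            rw [hroot i, Finset.mul_sum]
            refine Finset.sum_congr rfl fun j _ => ?_
            rw [zpow_add₀ (rtne i), zpow_natCast]
            ring
    rw [Finset.sum_congr rfl (fun i _ => key i), Finset.sum_comm]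
    refine Finset.sum_congr rfl fun j _ => ?_
    rw [Finset.mul_sum]
  -- s and u agree everywhere
  have hsu : ∀ k : ℤ, s k = u k := by
    have hw := my_seq_unique m (by omega) a ha1 (fun k => s k - u k)
      (by
        intro k
        rw [hrec k, hu_rec k, ← Finset.sum_sub_distrib]
        exact Finset.sum_congr rfl fun i _ => by ring)
      (by
        intro i
        rw [hu_init i]
        ring)
    intro k
    have := hw k
    exact sub_eq_zero.mp this
  have hcne : ∀ i0, c i0 ≠ 0 := by
    intro i0 hc0
    set P : ℂ[X] := ∏ i ∈ Finset.univ.erase i0, (X - C (rt i)) with hP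
    have hmonic : P.Monic := monic_prod_of_monic _ _ (fun i _ => monic_X_sub_C _)
    have hcard : (Finset.univ.erase i0).card = m - 1 := by
      rw [Finset.card_erase_of_mem (Finset.mem_univ _), Finset.card_univ, Fintype.card_fin]
    have hdeg : P.natDegree = m - 1 := by
      rw [hP, natDegree_prod_of_monic _ _ (fun i _ => monic_X_sub_C _)]
      simp only [natDegree_X_sub_C]
      rw [Finset.sum_const, smul_eq_mul, mul_one, hcard]
    set b : Fin (m - 1) → ℂ := fun j => -(P.coeff (j : ℕ)) with hb
    have hkey : ∀ x : ℂ, P.eval x = 0 →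
        x ^ (m - 1) = ∑ j : Fin (m - 1), b j * x ^ (j : ℕ) := by
      intro x hx
      have he := eval_eq_sum_range (x := x) (p := P)
      rw [hdeg, Finset.sum_range_succ] at he
      have hcoef : P.coeff (m - 1) = 1 := by
        have h1 := hmonic.coeff_natDegree
        rw [hdeg] at h1
        exact h1
      rw [hcoef, one_mul, hx] at he
      rw [hb, Fin.sum_univ_eq_sum_range (fun j => -(P.coeff j) * x ^ j) (m - 1)]
      rw [show (∑ j ∈ Finset.range (m - 1), -(P.coeff j) * x ^ j)
          = -∑ j ∈ Finset.range (m - 1), P.coeff j * x ^ j by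
        rw [← Finset.sum_neg_distrib]
        exact Finset.sum_congr rfl fun j _ => by ring]
      linear_combination -he
    have hroots : ∀ i ∈ Finset.univ.erase i0, P.eval (rt i) = 0 := by
      intro i hi
      rw [hP, eval_prod]
      exact Finset.prod_eq_zero hi (by simp)
    have hsk : ∀ t : ℤ, s t = ∑ i ∈ Finset.univ.erase i0, c i * rt i ^ t := by
      intro t
      rw [hsu t]
      simp only [hu]
      rw [← Finset.sum_erase_add Finset.univ _ (Finset.mem_univ i0), hc0, zero_mul, add_zero]
    have hrec' : ∀ k : ℤ, s (k + ((m - 1 : ℕ) : ℤ))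
        = ∑ j : Fin (m - 1), b j * s (k + ((j : ℕ) : ℤ)) := by
      intro k
      rw [hsk]
      have step1 : ∀ i ∈ Finset.univ.erase i0,
          c i * rt i ^ (k + ((m - 1 : ℕ) : ℤ))
            = ∑ j : Fin (m - 1), b j * (c i * rt i ^ (k + ((j : ℕ) : ℤ))) := by
        intro i hi
        calc c i * rt i ^ (k + ((m - 1 : ℕ) : ℤ))
            = c i * rt i ^ k * rt i ^ (m - 1 : ℕ) := by
              rw [zpow_add₀ (rtne i), zpow_natCast]; ring
          _ = c i * rt i ^ k * ∑ j : Fin (m - 1), b j * rt i ^ (j : ℕ) := by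
              rw [← hkey (rt i) (hroots i hi)]
          _ = ∑ j : Fin (m - 1), b j * (c i * rt i ^ (k + ((j : ℕ) : ℤ))) := by
              rw [Finset.mul_sum]
              refine Finset.sum_congr rfl fun j _ => ?_
              rw [zpow_add₀ (rtne i), zpow_natCast]
              ring
      rw [Finset.sum_congr rfl step1, Finset.sum_comm]
      refine Finset.sum_congr rfl fun j _ => ?_
      rw [← Finset.mul_sum, ← hsk]
    exact hmin (m - 1) (by omega) b hrec'
  exact ⟨c, hcne, fun k => by rw [hsu k]⟩



/-- key step of Section 4: if polynomials `γ_1,…,γ_{m+1} ∈ ℂ[x]` satisfy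
`γ_1(n)·s_{(n+1)h+r} + ⋯ + γ_m(n)·s_{(n+m)h+r} + γ_{m+1}(n) = 0` for every positive integer
`n`, then all the `γ_k` are the zero polynomial. -/
theorem stmt_9 (m : ℕ) (hm : 2 ≤ m) (a : Fin m → ℂ)
    (ha1 : a ⟨0, by omega⟩ ≠ 0)
    (s : ℤ → ℂ)
    (hrec : ∀ k : ℤ, s (k + m) = ∑ i : Fin m, a i * s (k + (i : ℕ)))
    (hmin : ∀ d : ℕ, d < m → ∀ b : Fin d → ℂ,
      ¬ (∀ k : ℤ, s (k + d) = ∑ i : Fin d, b i * s (k + (i : ℕ))))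
    (hs : ∃ i ∈ Finset.Icc (1 : ℤ) (m : ℤ), s i ≠ 0)
    (rt : Fin m → ℂ)
    (hroot : ∀ i, rt i ^ m = ∑ j : Fin m, a j * rt i ^ (j : ℕ))
    (hrt : Function.Injective rt)
    (h r : ℤ) (hh : h ≠ 0)
    (hdist : ∀ i j : Fin m, rt i ^ h = rt j ^ h → i = j)
    (hne1 : ∀ i : Fin m, rt i ^ h ≠ 1)
    (γ : Fin (m + 1) → Polynomial ℂ)
    (hγ : ∀ n : ℕ, 0 < n →
      (∑ k : Fin m, (γ k.castSucc).eval (n : ℂ) * s (((n : ℤ) + ((k : ℕ) : ℤ) + 1) * h + r))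
        + (γ (Fin.last m)).eval (n : ℂ) = 0) :
    ∀ k, γ k = 0 := by
  obtain ⟨c, hcne, hrep⟩ := my_rep m hm a ha1 s hrec hmin rt hroot hrt
  have rtne : ∀ i, rt i ≠ 0 := my_rt_ne_zero m hm a ha1 rt hroot
  set w : Fin m → ℂ := fun i => rt i ^ h with hw
  have hwne : ∀ i, w i ≠ 0 := fun i => zpow_ne_zero h (rtne i)
  have hwinj : Function.Injective w := fun i j hij => hdist i j hij
  set zz : Fin (m + 1) → ℂ := Fin.snoc w 1 with hzz
  set pp : Fin (m + 1) → ℂ[X] := Fin.snoc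
    (fun i : Fin m =>
      ∑ k : Fin m, C (c i * rt i ^ ((((k : ℕ) : ℤ) + 1) * h + r)) * γ k.castSucc)
    (γ (Fin.last m)) with hpp
  have hzzne : ∀ i, zz i ≠ 0 := by
    intro i
    refine Fin.lastCases (motive := fun i => zz i ≠ 0) ?_ ?_ i
    · rw [hzz]; simp
    · intro j; rw [hzz]; simpa using hwne j
  have hzzinj : Function.Injective zz := by
    intro i j hij
    refine Fin.lastCases (motive := fun i => zz i = zz j → i = j) ?_ ?_ i hij
    · refine Fin.lastCases (motive := fun j => zz (Fin.last m) = zz j → Fin.last m = j) ?_ ?_ j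
      · intro _; rfl
      · intro jj hjj
        rw [hzz] at hjj
        simp only [Fin.snoc_last, Fin.snoc_castSucc] at hjj
        exact absurd hjj.symm (hne1 jj)
    · intro ii hii
      refine Fin.lastCases (motive := fun j => zz ii.castSucc = zz j → ii.castSucc = j) ?_ ?_ j hii
      · intro hjj
        rw [hzz] at hjj
        simp only [Fin.snoc_last, Fin.snoc_castSucc] at hjj
        exact absurd hjj (hne1 ii)
      · intro jj hjj
        rw [hzz] at hjj
        simp only [Fin.snoc_castSucc] at hjj
        rw [hwinj hjj]
  have hyp : ∀ n : ℕ, 0 < n → ∑ i, (pp i).eval (n : ℂ) * zz i ^ n = 0 := by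
    intro n hn
    rw [Fin.sum_univ_castSucc]
    simp only [hpp, hzz, Fin.snoc_castSucc, Fin.snoc_last, one_pow, mul_one]
    have hterm : ∀ (i k : Fin m), rt i ^ (((n : ℤ) + ((k : ℕ) : ℤ) + 1) * h + r)
        = rt i ^ ((((k : ℕ) : ℤ) + 1) * h + r) * (rt i ^ h) ^ n := by
      intro i k
      rw [show ((n : ℤ) + ((k : ℕ) : ℤ) + 1) * h + r
          = ((((k : ℕ) : ℤ) + 1) * h + r) + h * (n : ℤ) by ring]
      rw [zpow_add₀ (rtne i), _root_.zpow_mul, zpow_natCast]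
    have hmain : ∑ i : Fin m,
        (∑ k : Fin m, C (c i * rt i ^ ((((k : ℕ) : ℤ) + 1) * h + r)) * γ k.castSucc).eval (n : ℂ)
          * w i ^ n
        = ∑ k : Fin m, (γ k.castSucc).eval (n : ℂ)
            * s (((n : ℤ) + ((k : ℕ) : ℤ) + 1) * h + r) := by
      have expand : ∀ k : Fin m, (γ k.castSucc).eval (n : ℂ)
          * s (((n : ℤ) + ((k : ℕ) : ℤ) + 1) * h + r)
          = ∑ i : Fin m, (c i * rt i ^ ((((k : ℕ) : ℤ) + 1) * h + r))
              * (γ k.castSucc).eval (n : ℂ) * w i ^ n := by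
        intro k
        rw [hrep, Finset.mul_sum]
        refine Finset.sum_congr rfl fun i _ => ?_
        simp only [hw]
        rw [hterm i k]
        ring
      rw [Finset.sum_congr rfl (fun k _ => expand k), Finset.sum_comm]
      refine Finset.sum_congr rfl fun i _ => ?_
      rw [eval_finset_sum, Finset.sum_mul]
      refine Finset.sum_congr rfl fun k _ => ?_
      rw [eval_mul, eval_C]
    rw [hmain]
    exact hγ n hn
  have hpz := my_expPoly (m + 1) zz hzzinj hzzne pp hyp
  -- last polynomial
  have hlast : γ (Fin.last m) = 0 := by
    have := hpz (Fin.last m)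
    rw [hpp] at this
    simpa using this
  -- each root gives a linear relation
  have heq : ∀ i : Fin m, ∑ k : Fin m, C (w i ^ (k : ℕ)) * γ k.castSucc = 0 := by
    intro i
    have hsplit : ∀ k : Fin m, c i * rt i ^ ((((k : ℕ) : ℤ) + 1) * h + r)
        = (c i * rt i ^ (h + r)) * w i ^ (k : ℕ) := by
      intro k
      rw [show ((((k : ℕ) : ℤ) + 1) * h + r) = (h + r) + h * ((k : ℕ) : ℤ) by ring]
      rw [zpow_add₀ (rtne i), _root_.zpow_mul, zpow_natCast, hw]
      ring
    have hppz := hpz i.castSucc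
    rw [hpp] at hppz
    simp only [Fin.snoc_castSucc] at hppz
    have : C (c i * rt i ^ (h + r)) * (∑ k : Fin m, C (w i ^ (k : ℕ)) * γ k.castSucc) = 0 := by
      rw [Finset.mul_sum, ← hppz]
      refine Finset.sum_congr rfl fun k _ => ?_
      rw [hsplit k]
      simp only [C_mul]
      ring
    rcases mul_eq_zero.mp this with h0 | h0
    · exfalso
      rw [C_eq_zero] at h0
      exact (mul_ne_zero (hcne i) (zpow_ne_zero _ (rtne i))) h0
    · exact h0
  -- Vandermonde: all γ k.castSucc vanish
  have hcs : ∀ k : Fin m, γ k.castSucc = 0 := by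
    have hcoeff : ∀ d : ℕ, ∀ k : Fin m, (γ k.castSucc).coeff d = 0 := by
      intro d
      set M : Matrix (Fin m) (Fin m) ℂ := Matrix.vandermonde w with hM
      have hdetM : M.det ≠ 0 := Matrix.det_vandermonde_ne_zero_iff.mpr hwinj
      set v : Fin m → ℂ := fun k => (γ k.castSucc).coeff d with hv
      have hmv : M.mulVec v = 0 := by
        funext i
        have hce := congrArg (fun q : ℂ[X] => q.coeff d) (heq i)
        simp only [finset_sum_coeff, coeff_C_mul, coeff_zero] at hce
        simp only [hM, Matrix.mulVec, dotProduct, Matrix.vandermonde, Matrix.of_apply,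
          hv, Pi.zero_apply]
        exact hce
      have hv0 : v = 0 := by
        calc v = (M⁻¹ * M).mulVec v := by
              rw [Matrix.nonsing_inv_mul _ (isUnit_iff_ne_zero.mpr hdetM), Matrix.one_mulVec]
          _ = M⁻¹.mulVec (M.mulVec v) := (Matrix.mulVec_mulVec _ _ _).symm
          _ = 0 := by rw [hmv, Matrix.mulVec_zero]
      intro k
      exact congrFun hv0 k
    intro k
    apply Polynomial.ext
    intro d
    rw [hcoeff d k, coeff_zero]
  intro k
  exact Fin.lastCases (motive := fun k => γ k = 0) hlast hcs k
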